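/- Let (G, τ, ⊕) be a topological gyrogroup and 𝒰 a family of neighborhoods of the identity 0 such that (a) for every U ∈ 𝒰 there exists V ∈ 𝒰 with V ⊕ V ⊆ U, and (b) for every U ∈ 𝒰 there exists V ∈ 𝒰 with ⊖V ⊆ U. Then H = ⋂𝒰 is a closed subgyrogroup of G. -/
import Mathlib


universe u

/-- A gyrogroup: a set with a binary operation `+`, a (unique) two-sided identity `0`,
(unique) two-sided inverses `-x`, and gyroautomorphisms `gyr x y` satisfying the
left gyroassociative law and the left loop property. -/
class Gyrogroup (G : Type u) extends Add G, Zero G, Neg G where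
  gyr : G → G → G → G
  zero_add : ∀ a : G, 0 + a = a
  add_zero : ∀ a : G, a + 0 = a
  zero_unique : ∀ e : G, (∀ a : G, e + a = a ∧ a + e = a) → e = 0
  neg_add : ∀ a : G, -a + a = 0
  add_neg : ∀ a : G, a + -a = 0
  neg_unique : ∀ a b : G, (b + a = 0 ∧ a + b = 0) → b = -a
  gyr_bijective : ∀ x y : G, Function.Bijective (gyr x y)
  gyr_add : ∀ x y a b : G, gyr x y (a + b) = gyr x y a + gyr x y b
  add_gyroassoc : ∀ x y z : G, x + (y + z) = x + y + gyr x y z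
  gyr_left_loop : ∀ x y : G, gyr (x + y) y = gyr x y

open Gyrogroup

/-- A topological gyrogroup: a gyrogroup with a topology making `+` jointly
continuous and negation continuous. -/
class TopologicalGyrogroup (G : Type u) [TopologicalSpace G] [Gyrogroup G] : Prop where
  continuous_add : Continuous fun p : G × G => p.1 + p.2
  continuous_neg : Continuous fun x : G => -x

/-- `gadd A B = {a + b : a ∈ A, b ∈ B}`. -/
def gadd {G : Type u} [Gyrogroup G] (A B : Set G) : Set G := Set.image2 (· + ·) A B

/-- `gneg A = {-a : a ∈ A}`. -/
def gneg {G : Type u} [Gyrogroup G] (A : Set G) : Set G := (fun x : G => -x) '' A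

/-- A subgyrogroup: a nonempty subset closed under `+` and negation. -/
def IsSubgyrogroup {G : Type u} [Gyrogroup G] (H : Set G) : Prop :=
  H.Nonempty ∧ (∀ x ∈ H, -x ∈ H) ∧ ∀ x ∈ H, ∀ y ∈ H, x + y ∈ H

/-- An L-subgyrogroup: a subgyrogroup with `gyr a h '' H = H` for all `a ∈ G`, `h ∈ H`. -/
def IsLSubgyrogroup {G : Type u} [Gyrogroup G] (H : Set G) : Prop :=
  IsSubgyrogroup H ∧ ∀ a : G, ∀ h ∈ H, gyr a h '' H = H

section Aux

variable {G : Type u} [Gyrogroup G]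

lemma my_add_left_inj (a : G) : Function.Injective (fun b : G => a + b) := by
  intro b c h
  have hb : -a + (a + b) = gyr (-a) a b := by
    rw [add_gyroassoc, Gyrogroup.neg_add, Gyrogroup.zero_add]
  have hc : -a + (a + c) = gyr (-a) a c := by
    rw [add_gyroassoc, Gyrogroup.neg_add, Gyrogroup.zero_add]
  have : gyr (-a) a b = gyr (-a) a c := by
    rw [← hb, ← hc]; simp only at h; rw [h]
  exact (gyr_bijective (-a) a).1 this

lemma my_gyr_zero (y z : G) : gyr (0 : G) y z = z := by
  have h := add_gyroassoc (0 : G) y z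
  rw [Gyrogroup.zero_add, Gyrogroup.zero_add] at h
  exact (my_add_left_inj y h).symm

lemma my_gyr_neg (a z : G) : gyr a (-a) z = z := by
  have h := gyr_left_loop a (-a)
  rw [Gyrogroup.add_neg] at h
  rw [← h, my_gyr_zero]

lemma my_add_neg_cancel (a b : G) : a + (-a + b) = b := by
  rw [add_gyroassoc, Gyrogroup.add_neg, Gyrogroup.zero_add, my_gyr_neg]

end Aux

theorem stmt9 {G : Type u} [TopologicalSpace G] [Gyrogroup G] [TopologicalGyrogroup G]
    (𝒰 : Set (Set G)) (hnbhd : ∀ U ∈ 𝒰, U ∈ nhds (0 : G))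
    (ha : ∀ U ∈ 𝒰, ∃ V ∈ 𝒰, gadd V V ⊆ U)
    (hb : ∀ U ∈ 𝒰, ∃ V ∈ 𝒰, gneg V ⊆ U) :
    IsSubgyrogroup (⋂₀ 𝒰) ∧ IsClosed (⋂₀ 𝒰) := by
  constructor
  · refine ⟨⟨0, ?_⟩, ?_, ?_⟩
    · intro U hU
      exact mem_of_mem_nhds (hnbhd U hU)
    · intro x hx U hU
      obtain ⟨V, hV, hVU⟩ := hb U hU
      exact hVU ⟨x, hx V hV, rfl⟩
    · intro x hx y hy U hU
      obtain ⟨V, hV, hVU⟩ := ha U hU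
      exact hVU (Set.mem_image2_of_mem (hx V hV) (hy V hV))
  · rw [← closure_subset_iff_isClosed]
    intro x hx U hU
    obtain ⟨V, hV, hVU⟩ := ha U hU
    have hg : Continuous (fun b : G => -b + x) :=
      TopologicalGyrogroup.continuous_add.comp
        (TopologicalGyrogroup.continuous_neg.prodMk continuous_const)
    have hVx : (fun b : G => -b + x) ⁻¹' V ∈ nhds x := by
      apply hg.continuousAt.preimage_mem_nhds
      rw [Gyrogroup.neg_add]
      exact hnbhd V hV
    obtain ⟨h, hhV, hhH⟩ := mem_closure_iff_nhds.1 hx _ hVx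
    have hxeq : h + (-h + x) = x := my_add_neg_cancel h x
    have : x ∈ gadd V V := by
      rw [← hxeq]
      exact Set.mem_image2_of_mem (hhH V hV) hhV
    exact hVU this
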